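/- arXiv:1107.4424 — 2 statements merged into one kernel-verified Lean document; each statement's English description precedes it below -/
import Mathlib

section
/- Let σ, ω be real numbers with σ > 0 and ω > 0, and define g : [0,∞) → ℝ by g(x) = e^{−σx}(ω cos(ωx) + σ sin(ωx)). Then 2∫₀^∞ ( g''(x)² − 2(ω²−σ²) g'(x)² + (σ²+ω²)² g(x)² ) dx = 4σω²(σ²+ω²). -/
open MeasureTheory Real Filter

section aux
variable (σ ω : ℝ)

-- first derivative of the trial function
lemma trial_hd1 (x : ℝ) :
    HasDerivAt (fun y : ℝ => Real.exp (-σ * y) * (ω * Real.cos (ω * y) + σ * Real.sin (ω * y)))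
      (-(σ^2 + ω^2) * (Real.exp (-σ * x) * Real.sin (ω * x))) x := by
  have he : HasDerivAt (fun y : ℝ => Real.exp (-σ * y)) (Real.exp (-σ * x) * (-σ)) x :=
    (Real.hasDerivAt_exp (-σ * x)).comp x (by simpa only [mul_one, id_eq] using (hasDerivAt_id x).const_mul (-σ))
  have hc : HasDerivAt (fun y : ℝ => Real.cos (ω * y)) (-Real.sin (ω * x) * ω) x :=
    (Real.hasDerivAt_cos (ω * x)).comp x (by simpa only [mul_one, id_eq] using (hasDerivAt_id x).const_mul ω)
  have hs : HasDerivAt (fun y : ℝ => Real.sin (ω * y)) (Real.cos (ω * x) * ω) x :=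
    (Real.hasDerivAt_sin (ω * x)).comp x (by simpa only [mul_one, id_eq] using (hasDerivAt_id x).const_mul ω)
  have := he.mul ((hc.const_mul ω).add (hs.const_mul σ))
  refine this.congr_deriv ?_
  simp only [Pi.add_apply]
  ring

lemma trial_hd2 (x : ℝ) :
    HasDerivAt (fun y : ℝ => -(σ^2 + ω^2) * (Real.exp (-σ * y) * Real.sin (ω * y)))
      (-(σ^2 + ω^2) * (Real.exp (-σ * x) * (ω * Real.cos (ω * x) - σ * Real.sin (ω * x)))) x := by
  have he : HasDerivAt (fun y : ℝ => Real.exp (-σ * y)) (Real.exp (-σ * x) * (-σ)) x :=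
    (Real.hasDerivAt_exp (-σ * x)).comp x (by simpa only [mul_one, id_eq] using (hasDerivAt_id x).const_mul (-σ))
  have hs : HasDerivAt (fun y : ℝ => Real.sin (ω * y)) (Real.cos (ω * x) * ω) x :=
    (Real.hasDerivAt_sin (ω * x)).comp x (by simpa only [mul_one, id_eq] using (hasDerivAt_id x).const_mul ω)
  have := (he.mul hs).const_mul (-(σ^2 + ω^2))
  refine this.congr_deriv ?_
  ring

-- the antiderivative G
noncomputable def trialG (x : ℝ) : ℝ :=
  (σ^2 + ω^2) * (Real.exp (-σ * x))^2 *
    (-σ * (σ^2 + ω^2) + σ * (σ^2 - ω^2) * Real.cos ((2*ω) * x)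
      + ω * (ω^2 - σ^2) * Real.sin ((2*ω) * x))

lemma trialG_hasDeriv (x : ℝ) :
    HasDerivAt (trialG σ ω)
      ((σ^2 + ω^2)^2 * (Real.exp (-σ * x))^2
        * (2*σ^2 + 2*(ω^2 - σ^2) * Real.cos ((2*ω) * x))) x := by
  have he : HasDerivAt (fun y : ℝ => Real.exp (-σ * y)) (Real.exp (-σ * x) * (-σ)) x :=
    (Real.hasDerivAt_exp (-σ * x)).comp x (by simpa only [mul_one, id_eq] using (hasDerivAt_id x).const_mul (-σ))
  have he2 : HasDerivAt (fun y : ℝ => (Real.exp (-σ * y))^2)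
      (2 * Real.exp (-σ * x) * (Real.exp (-σ * x) * (-σ))) x := by
    simpa [Pi.pow_def, mul_comm, mul_assoc] using (he.pow 2)
  have hc : HasDerivAt (fun y : ℝ => Real.cos ((2*ω) * y)) (-Real.sin ((2*ω) * x) * (2*ω)) x :=
    (Real.hasDerivAt_cos ((2*ω) * x)).comp x (by simpa only [mul_one, id_eq] using (hasDerivAt_id x).const_mul (2*ω))
  have hs : HasDerivAt (fun y : ℝ => Real.sin ((2*ω) * y)) (Real.cos ((2*ω) * x) * (2*ω)) x :=
    (Real.hasDerivAt_sin ((2*ω) * x)).comp x (by simpa only [mul_one, id_eq] using (hasDerivAt_id x).const_mul (2*ω))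
  have hQ : HasDerivAt (fun y : ℝ => -σ * (σ^2 + ω^2) + σ * (σ^2 - ω^2) * Real.cos ((2*ω) * y)
      + ω * (ω^2 - σ^2) * Real.sin ((2*ω) * y))
      (σ * (σ^2 - ω^2) * (-Real.sin ((2*ω) * x) * (2*ω))
        + ω * (ω^2 - σ^2) * (Real.cos ((2*ω) * x) * (2*ω))) x := by
    refine (((hasDerivAt_const x _).add (hc.const_mul (σ * (σ^2 - ω^2)))).add
      (hs.const_mul (ω * (ω^2 - σ^2)))).congr_deriv ?_
    ring
  have := (he2.mul hQ).const_mul (σ^2 + ω^2)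
  refine HasDerivAt.congr_deriv (this.congr_of_eventuallyEq (Filter.Eventually.of_forall fun y => ?_)) ?_
  · simp [trialG]; ring
  · ring

end aux


/-- Value of the quadratic functional `I` on the trial function
`g(x) = e^{−σx}(ω cos(ωx) + σ sin(ωx))` over `[0,∞)`:
`2∫₀^∞ (g''² − 2(ω²−σ²)g'² + (σ²+ω²)²g²) = 4σω²(σ²+ω²)`. -/
theorem trial_function_I_value (σ ω : ℝ) (hσ : 0 < σ) (hω : 0 < ω) :
    2 * ∫ x in Set.Ioi (0 : ℝ),
        ((iteratedDeriv 2
            (fun y : ℝ => Real.exp (-σ * y) * (ω * Real.cos (ω * y) + σ * Real.sin (ω * y))) x) ^ 2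
          - 2 * (ω ^ 2 - σ ^ 2)
            * (deriv
                (fun y : ℝ => Real.exp (-σ * y) * (ω * Real.cos (ω * y) + σ * Real.sin (ω * y))) x) ^ 2
          + (σ ^ 2 + ω ^ 2) ^ 2
            * (Real.exp (-σ * x) * (ω * Real.cos (ω * x) + σ * Real.sin (ω * x))) ^ 2)
      = 4 * σ * ω ^ 2 * (σ ^ 2 + ω ^ 2) := by
  set F' : ℝ → ℝ := fun x => (σ^2 + ω^2)^2 * (Real.exp (-σ * x))^2
      * (2*σ^2 + 2*(ω^2 - σ^2) * Real.cos ((2*ω) * x)) with hF'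
  have hderiv1 : deriv (fun y : ℝ => Real.exp (-σ * y) * (ω * Real.cos (ω * y) + σ * Real.sin (ω * y)))
      = fun x => -(σ^2 + ω^2) * (Real.exp (-σ * x) * Real.sin (ω * x)) := by
    funext x; exact (trial_hd1 σ ω x).deriv
  have hderiv2 : ∀ x : ℝ, iteratedDeriv 2
      (fun y : ℝ => Real.exp (-σ * y) * (ω * Real.cos (ω * y) + σ * Real.sin (ω * y))) x
      = -(σ^2 + ω^2) * (Real.exp (-σ * x) * (ω * Real.cos (ω * x) - σ * Real.sin (ω * x))) := by
    intro x
    rw [show (2 : ℕ) = 1 + 1 from rfl, iteratedDeriv_succ, iteratedDeriv_one, hderiv1]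
    exact (trial_hd2 σ ω x).deriv
  have hintegrand : ∀ x : ℝ,
      ((iteratedDeriv 2
            (fun y : ℝ => Real.exp (-σ * y) * (ω * Real.cos (ω * y) + σ * Real.sin (ω * y))) x) ^ 2
          - 2 * (ω ^ 2 - σ ^ 2)
            * (deriv
                (fun y : ℝ => Real.exp (-σ * y) * (ω * Real.cos (ω * y) + σ * Real.sin (ω * y))) x) ^ 2
          + (σ ^ 2 + ω ^ 2) ^ 2
            * (Real.exp (-σ * x) * (ω * Real.cos (ω * x) + σ * Real.sin (ω * x))) ^ 2) = F' x := by
    intro x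
    rw [hderiv2 x, hderiv1, hF']
    have hc2 : Real.cos (2 * ω * x) = 2 * Real.cos (ω * x)^2 - 1 := by
      rw [mul_assoc]; exact Real.cos_two_mul (ω * x)
    have hpyth := Real.sin_sq_add_cos_sq (ω * x)
    show _ = (σ^2 + ω^2)^2 * (Real.exp (-σ * x))^2
      * (2*σ^2 + 2*(ω^2 - σ^2) * Real.cos ((2*ω) * x))
    rw [hc2]
    beta_reduce
    linear_combination ((2*(2*σ^2-ω^2))*(σ^2+ω^2)^2*(Real.exp (-σ*x))^2) * hpyth
  have hexp2 : ∀ x : ℝ, (Real.exp (-σ * x))^2 = Real.exp (-(2*σ) * x) := by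
    intro x; rw [sq, ← Real.exp_add]; congr 1; ring
  have hint : IntegrableOn F' (Set.Ioi (0:ℝ)) := by
    have hbase : IntegrableOn (fun x : ℝ => Real.exp (-(2*σ) * x)) (Set.Ioi (0:ℝ)) :=
      exp_neg_integrableOn_Ioi 0 (by positivity)
    refine (hbase.const_mul ((σ^2 + ω^2)^2 * (2*σ^2 + 2*|ω^2 - σ^2|))).mono' ?_ ?_
    · apply Continuous.aestronglyMeasurable
      fun_prop
    · filter_upwards with x
      rw [hF']
      have h2 : (0:ℝ) < Real.exp (-(2*σ) * x) := Real.exp_pos _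
      have hb : |2*(ω^2 - σ^2) * Real.cos ((2*ω)*x)| ≤ 2*|ω^2 - σ^2| := by
        rw [abs_mul, abs_mul, abs_two]
        exact mul_le_of_le_one_right (by positivity) (Real.abs_cos_le_one _)
      have h3 : |2*σ^2 + 2*(ω^2 - σ^2) * Real.cos ((2*ω) * x)| ≤ 2*σ^2 + 2*|ω^2 - σ^2| := by
        refine (abs_add_le _ _).trans ?_
        rw [abs_of_nonneg (by positivity : (0:ℝ) ≤ 2*σ^2)]
        linarith
      rw [Real.norm_eq_abs, abs_mul, abs_mul, hexp2 x, abs_of_pos h2,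
        abs_of_nonneg (by positivity : (0:ℝ) ≤ (σ^2 + ω^2)^2)]
      calc (σ^2 + ω^2)^2 * Real.exp (-(2*σ)*x) * |2*σ^2 + 2*(ω^2 - σ^2) * Real.cos ((2*ω) * x)|
          ≤ (σ^2 + ω^2)^2 * Real.exp (-(2*σ)*x) * (2*σ^2 + 2*|ω^2 - σ^2|) := by
            gcongr
        _ = (σ^2 + ω^2)^2 * (2*σ^2 + 2*|ω^2 - σ^2|) * Real.exp (-(2*σ)*x) := by ring
  have htend : Filter.Tendsto (trialG σ ω) atTop (nhds 0) := by
    have hb : Filter.Tendsto (fun x : ℝ => (σ^2+ω^2) * (σ*(σ^2+ω^2) + σ*|σ^2-ω^2| + ω*|ω^2-σ^2|)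
        * Real.exp (-(2*σ) * x)) atTop (nhds 0) := by
      rw [show (0:ℝ) = (σ^2+ω^2) * (σ*(σ^2+ω^2) + σ*|σ^2-ω^2| + ω*|ω^2-σ^2|) * 0 by ring]
      exact (Real.tendsto_exp_atBot.comp
        (tendsto_id.const_mul_atTop_of_neg (by linarith : (-(2*σ) : ℝ) < 0))).const_mul _
    refine squeeze_zero_norm (fun x => ?_) hb
    rw [Real.norm_eq_abs]
    unfold trialG
    have h2 : (0:ℝ) < Real.exp (-(2*σ) * x) := Real.exp_pos _
    have hb0 : |(-σ) * (σ^2+ω^2)| = σ*(σ^2+ω^2) := by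
      rw [abs_mul, abs_neg, abs_of_pos hσ, abs_of_nonneg (by positivity : (0:ℝ) ≤ σ^2+ω^2)]
    have hb1 : |σ * (σ^2 - ω^2) * Real.cos ((2*ω)*x)| ≤ σ * |σ^2-ω^2| := by
      rw [abs_mul, abs_mul, abs_of_pos hσ]
      exact mul_le_of_le_one_right (by positivity) (Real.abs_cos_le_one _)
    have hb2 : |ω * (ω^2 - σ^2) * Real.sin ((2*ω)*x)| ≤ ω * |ω^2-σ^2| := by
      rw [abs_mul, abs_mul, abs_of_pos hω]
      exact mul_le_of_le_one_right (by positivity) (Real.abs_sin_le_one _)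
    have h3 : |(-σ) * (σ^2 + ω^2) + σ * (σ^2 - ω^2) * Real.cos ((2*ω) * x)
        + ω * (ω^2 - σ^2) * Real.sin ((2*ω) * x)| ≤ σ*(σ^2+ω^2) + σ*|σ^2-ω^2| + ω*|ω^2-σ^2| := by
      have := (abs_add_le ((-σ) * (σ^2 + ω^2) + σ * (σ^2 - ω^2) * Real.cos ((2*ω) * x))
        (ω * (ω^2 - σ^2) * Real.sin ((2*ω) * x))).trans
        (add_le_add_left (abs_add_le ((-σ) * (σ^2 + ω^2)) (σ * (σ^2 - ω^2) * Real.cos ((2*ω) * x))) _)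
      rw [hb0] at this
      linarith
    rw [abs_mul, abs_mul, hexp2 x, abs_of_pos h2,
      abs_of_nonneg (by positivity : (0:ℝ) ≤ σ^2 + ω^2)]
    calc (σ^2+ω^2) * Real.exp (-(2*σ)*x) * |(-σ * (σ^2 + ω^2) + σ * (σ^2 - ω^2) * Real.cos ((2*ω) * x)
          + ω * (ω^2 - σ^2) * Real.sin ((2*ω) * x))|
        ≤ (σ^2+ω^2) * Real.exp (-(2*σ)*x) * (σ*(σ^2+ω^2) + σ*|σ^2-ω^2| + ω*|ω^2-σ^2|) := by
          gcongr
      _ = (σ^2+ω^2) * (σ*(σ^2+ω^2) + σ*|σ^2-ω^2| + ω*|ω^2-σ^2|) * Real.exp (-(2*σ)*x) := by ring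
  have hG0 : ∫ x in Set.Ioi (0:ℝ), F' x = 0 - trialG σ ω 0 :=
    integral_Ioi_of_hasDerivAt_of_tendsto
      (trialG_hasDeriv σ ω 0).continuousAt.continuousWithinAt
      (fun x _ => trialG_hasDeriv σ ω x) hint htend
  have hcongr : (∫ x in Set.Ioi (0 : ℝ),
        ((iteratedDeriv 2
            (fun y : ℝ => Real.exp (-σ * y) * (ω * Real.cos (ω * y) + σ * Real.sin (ω * y))) x) ^ 2
          - 2 * (ω ^ 2 - σ ^ 2)
            * (deriv
                (fun y : ℝ => Real.exp (-σ * y) * (ω * Real.cos (ω * y) + σ * Real.sin (ω * y))) x) ^ 2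
          + (σ ^ 2 + ω ^ 2) ^ 2
            * (Real.exp (-σ * x) * (ω * Real.cos (ω * x) + σ * Real.sin (ω * x))) ^ 2))
      = ∫ x in Set.Ioi (0:ℝ), F' x :=
    integral_congr_ae (Filter.Eventually.of_forall fun x => hintegrand x)
  rw [hcongr, hG0]
  simp only [trialG, mul_zero, Real.exp_zero, Real.cos_zero, Real.sin_zero, one_pow]
  ring
end

section
/- Let p > 1 be real and β, c real with c² < 1 and β < 2√(1−c²). Suppose φ : ℝ → ℝ is a Schwartz function satisfying the solitary-wave equation φ''''(x) + βφ''(x) + (1−c²)φ(x) = |φ(x)|^{p−1}φ(x) for all x ∈ ℝ, and let w(x) = φ(x) + 2xφ'(x). Then ∫_ℝ ( w''''(x) + βw''(x) + (1−c²)w(x) − p|φ(x)|^{p−1}w(x) ) · w(x) dx = ((1−p)(p−3)/(p+1)) ∫_ℝ |φ(x)|^{p+1} dx + ∫_ℝ ( 24(φ''(x))² − 4β(φ'(x))² ) dx. -/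
open MeasureTheory Filter SchwartzMap Set Topology


noncomputable def DD (f : 𝓢(ℝ, ℝ)) : 𝓢(ℝ, ℝ) := SchwartzMap.derivCLM ℝ ℝ f

lemma DD_coe (f : 𝓢(ℝ, ℝ)) : deriv (⇑f) = ⇑(DD f) :=
  funext fun x => (SchwartzMap.derivCLM_apply ℝ f x).symm

lemma sch_hasDerivAt (f : 𝓢(ℝ, ℝ)) (x : ℝ) : HasDerivAt f (DD f x) x := by
  have h := f.differentiable.differentiableAt (x := x)
  simpa [DD, SchwartzMap.derivCLM_apply] using h.hasDerivAt

lemma sch_tendsto (f : 𝓢(ℝ, ℝ)) {l : Filter ℝ} (hl : l ≤ cocompact ℝ) :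
    Tendsto f l (𝓝 0) := (zero_at_infty f).mono_left hl

lemma sch_bound (f : 𝓢(ℝ, ℝ)) : ∃ C, ∀ x, ‖f x‖ ≤ C := by
  obtain ⟨C, hC⟩ := f.decay 0 0
  exact ⟨C, fun x => by simpa using hC.2 x⟩

lemma sch_bound_x (f : 𝓢(ℝ, ℝ)) : ∃ C, ∀ x : ℝ, ‖x * f x‖ ≤ C := by
  obtain ⟨C, hC⟩ := f.decay 1 0
  refine ⟨C, fun x => ?_⟩
  have := hC.2 x
  simpa [abs_mul, norm_iteratedFDeriv_zero] using this

lemma int_mul (f g : 𝓢(ℝ, ℝ)) : Integrable (fun x => f x * g x) :=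
  g.integrable.bdd_mul f.continuous.aestronglyMeasurable (ae_of_all _ (sch_bound f).choose_spec)

lemma int_xmul (f g : 𝓢(ℝ, ℝ)) : Integrable (fun x : ℝ => x * f x * g x) := by
  have := Integrable.bdd_mul (μ := volume) g.integrable ((continuous_id.mul f.continuous).aestronglyMeasurable)
    (ae_of_all _ (sch_bound_x f).choose_spec)
  simpa [mul_assoc] using this

lemma tend_mul (f g : 𝓢(ℝ, ℝ)) {l : Filter ℝ} (hl : l ≤ cocompact ℝ) :
    Tendsto (fun x => f x * g x) l (𝓝 0) := by
  simpa using (sch_tendsto f hl).mul (sch_tendsto g hl)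

lemma tend_xmul (f g : 𝓢(ℝ, ℝ)) {l : Filter ℝ} (hl : l ≤ cocompact ℝ) :
    Tendsto (fun x : ℝ => x * f x * g x) l (𝓝 0) := by
  obtain ⟨C, hC⟩ := sch_bound_x f
  have h1 : Tendsto (fun x : ℝ => C * ‖g x‖) l (𝓝 0) := by
    simpa using ((sch_tendsto g hl).norm.const_mul C)
  refine squeeze_zero_norm (fun x => ?_) h1
  calc ‖x * f x * g x‖ = ‖x * f x‖ * ‖g x‖ := by rw [norm_mul]
  _ ≤ C * ‖g x‖ := by
      rcases (norm_nonneg (g x)).eq_or_lt.imp Eq.symm id with h | h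
      · simp [h]
      · exact mul_le_mul_of_nonneg_right (hC x) h.le

lemma integral_deriv_zero (F F' : ℝ → ℝ) (h : ∀ x, HasDerivAt F (F' x) x)
    (hi : Integrable F') (ht : Tendsto F atTop (𝓝 0)) (hb : Tendsto F atBot (𝓝 0)) :
    ∫ x, F' x = 0 := by
  have h1 : ∫ x in Ioi (0:ℝ), F' x = 0 - F 0 :=
    integral_Ioi_of_hasDerivAt_of_tendsto (h 0).continuousAt.continuousWithinAt
      (fun x _ => h x) hi.integrableOn ht
  have h2 : ∫ x in Iic (0:ℝ), F' x = F 0 - 0 :=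
    integral_Iic_of_hasDerivAt_of_tendsto (h 0).continuousAt.continuousWithinAt
      (fun x _ => h x) hi.integrableOn hb
  rw [← intervalIntegral.integral_Iic_add_Ioi hi.integrableOn hi.integrableOn, h1, h2]
  ring


lemma hasDerivAt_nl {p : ℝ} (hp : 1 < p) (u : ℝ) :
    HasDerivAt (fun v : ℝ => |v| ^ (p - 1) * v) (p * |u| ^ (p - 1)) u := by
  rcases lt_trichotomy u 0 with h | h | h
  · have hev : (fun v : ℝ => -((-v) ^ p)) =ᶠ[𝓝 u] fun v : ℝ => |v| ^ (p - 1) * v := by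
      filter_upwards [eventually_lt_nhds h] with v hv
      have hv' : (0:ℝ) < -v := by linarith
      rw [abs_of_neg hv]
      have : (-v) ^ p = (-v) ^ (p - 1) * (-v) := by
        rw [← Real.rpow_add_one hv'.ne']; ring_nf
      rw [this]; ring
    have h1 : HasDerivAt (fun v : ℝ => -((-v) ^ p)) (p * |u| ^ (p - 1)) u := by
      have h2 : HasDerivAt (fun v : ℝ => -v) (-1) u := (hasDerivAt_id u).neg
      have h3 := (Real.hasDerivAt_rpow_const (x := -u) (p := p) (Or.inl (by linarith))).comp u h2
      have := h3.neg
      exact this.congr_deriv (by rw [abs_of_neg h]; ring)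
    exact h1.congr_of_eventuallyEq hev.symm
  · subst h
    rw [hasDerivAt_iff_tendsto_slope]
    have : p * |(0:ℝ)| ^ (p - 1) = 0 := by
      rw [abs_zero, Real.zero_rpow (by linarith : p - 1 ≠ 0)]; ring
    rw [this]
    have hev : (fun v : ℝ => |v| ^ (p - 1)) =ᶠ[𝓝[≠] (0:ℝ)] slope (fun v : ℝ => |v| ^ (p - 1) * v) 0 := by
      filter_upwards [self_mem_nhdsWithin] with v hv
      have hv' : v ≠ 0 := hv
      simp only [slope_def_field, div_eq_iff, abs_zero]
      field_simp [sub_eq_zero]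
      simp
    refine Tendsto.congr' hev ?_
    have : Tendsto (fun v : ℝ => |v| ^ (p - 1)) (𝓝 0) (𝓝 0) := by
      have h0 : ContinuousAt (fun t : ℝ => t ^ (p - 1)) |0| := by
        simp only [abs_zero]
        exact (Real.continuousAt_rpow_const 0 (p-1) (Or.inr (by linarith)))
      have := h0.comp continuous_abs.continuousAt
      simpa [Real.zero_rpow (by linarith : p - 1 ≠ 0), Function.comp_def] using this.tendsto
    exact this.mono_left nhdsWithin_le_nhds
  · have hev : (fun v : ℝ => v ^ p) =ᶠ[𝓝 u] fun v : ℝ => |v| ^ (p - 1) * v := by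
      filter_upwards [eventually_gt_nhds h] with v hv
      rw [abs_of_pos hv, ← Real.rpow_add_one hv.ne']; ring_nf
    have h1 := Real.hasDerivAt_rpow_const (x := u) (p := p) (Or.inl h.ne')
    have h2 := h1.congr_of_eventuallyEq hev.symm
    rw [abs_of_pos h]
    exact h2

lemma nl_sq {p : ℝ} (hp : 1 < p) (u : ℝ) : |u| ^ (p - 1) * u * u = |u| ^ (p + 1) := by
  rcases eq_or_ne u 0 with rfl | hv
  · simp [Real.zero_rpow (by linarith : p + 1 ≠ 0)]
  · have hv' : (0:ℝ) < |u| := abs_pos.mpr hv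
    have h : |u| ^ (p + 1) = |u| ^ (p - 1) * |u| ^ (2:ℝ) := by
      rw [← Real.rpow_add hv']; ring_nf
    rw [h, show |u| ^ (2:ℝ) = u * u by
      rw [show (2:ℝ) = ((2:ℕ):ℝ) by norm_num, Real.rpow_natCast, sq_abs]; ring]
    ring

lemma hasDerivAt_nl' {p : ℝ} (hp : 1 < p) (u : ℝ) :
    HasDerivAt (fun v : ℝ => |v| ^ (p + 1)) ((p + 1) * (|u| ^ (p - 1) * u)) u := by
  have h := (hasDerivAt_nl hp u).mul (hasDerivAt_id u)
  have hfun : (fun v : ℝ => |v| ^ (p - 1) * v * v) = fun v : ℝ => |v| ^ (p + 1) :=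
    funext fun v => nl_sq hp v
  simp only [id_eq] at h
  rw [show ((fun v : ℝ => |v| ^ (p - 1) * v) * id) = fun v : ℝ => |v| ^ (p - 1) * v * v from rfl, hfun] at h
  exact h.congr_deriv (by ring)

lemma atTop_le_cocompact' : (atTop : Filter ℝ) ≤ cocompact ℝ := by
  rw [cocompact_eq_atBot_atTop]; exact le_sup_right
lemma atBot_le_cocompact' : (atBot : Filter ℝ) ≤ cocompact ℝ := by
  rw [cocompact_eq_atBot_atTop]; exact le_sup_left

lemma my_integral_add {f g : ℝ → ℝ} (hf : Integrable f) (hg : Integrable g) :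
    ∫ x, (f x + g x) = (∫ x, f x) + ∫ x, g x := integral_add hf hg

lemma sqint (f : 𝓢(ℝ, ℝ)) : ∫ x, f x * f x = ∫ x, f x ^ 2 := by
  simp_rw [pow_two]

lemma my_integral_sub {f g : ℝ → ℝ} (hf : Integrable f) (hg : Integrable g) :
    ∫ x, (f x - g x) = (∫ x, f x) - ∫ x, g x := integral_sub hf hg

lemma int_sq (f : 𝓢(ℝ, ℝ)) : Integrable (fun x => f x ^ 2) := by
  have := int_mul f f
  simpa [← pow_two] using this

/-- IBP: `∫ f' g = - ∫ f g'`. -/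
lemma ibp_pair (f g : 𝓢(ℝ, ℝ)) :
    ∫ x, DD f x * g x = - ∫ x, f x * DD g x := by
  have h0 : ∫ x, (DD f x * g x + f x * DD g x) = 0 := by
    refine integral_deriv_zero (fun x => f x * g x) _ (fun x => ?_)
      ((int_mul (DD f) g).add (int_mul f (DD g)))
      (tend_mul f g atTop_le_cocompact') (tend_mul f g atBot_le_cocompact')
    exact (sch_hasDerivAt f x).mul (sch_hasDerivAt g x)
  rw [my_integral_add (int_mul (DD f) g) (int_mul f (DD g))] at h0
  linarith

/-- IBP with weight `x`. -/
lemma ibp_x (f g : 𝓢(ℝ, ℝ)) :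
    ∫ x : ℝ, x * DD f x * g x
      = - (∫ x, f x * g x) - ∫ x : ℝ, x * f x * DD g x := by
  have h0 : ∫ x : ℝ, (f x * g x + (x * DD f x * g x + x * f x * DD g x)) = 0 := by
    refine integral_deriv_zero (fun x => x * f x * g x) _ (fun x => ?_)
      ((int_mul f g).add ((int_xmul (DD f) g).add (int_xmul f (DD g))))
      (tend_xmul f g atTop_le_cocompact') (tend_xmul f g atBot_le_cocompact')
    have h := (hasDerivAt_id x).mul ((sch_hasDerivAt f x).mul (sch_hasDerivAt g x))
    simp only [id_eq] at h
    have h2 : (fun y : ℝ => y * (f y * g y)) = fun y : ℝ => y * f y * g y :=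
      funext fun y => by ring
    rw [Pi.mul_apply, show (id * (⇑f * ⇑g)) = fun y : ℝ => y * (f y * g y) from rfl, h2] at h
    refine h.congr_deriv ?_
    first
    | ring
    | (simp only [id_eq]; ring)
  have hA : Integrable (fun x : ℝ => x * DD f x * g x + x * f x * DD g x) :=
    (int_xmul (DD f) g).add (int_xmul f (DD g))
  rw [my_integral_add (int_mul f g) hA,
    my_integral_add (int_xmul (DD f) g) (int_xmul f (DD g))] at h0
  linarith

/-- `∫ x f f' = -(1/2) ∫ f²`. -/
lemma ibp_x_self (f : 𝓢(ℝ, ℝ)) :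
    ∫ x : ℝ, x * f x * DD f x = -(1/2) * ∫ x : ℝ, f x ^ 2 := by
  have h := ibp_x f f
  have hc : ∫ x : ℝ, x * DD f x * f x = ∫ x : ℝ, x * f x * DD f x :=
    integral_congr_ae (Eventually.of_forall fun x => by ring)
  rw [hc] at h
  rw [← sqint]
  linarith

lemma e4 (f : 𝓢(ℝ, ℝ)) : ∫ x, DD (DD f) x * f x = - ∫ x, DD f x ^ 2 := by
  rw [ibp_pair (DD f) f, sqint]

lemma e2 (f : 𝓢(ℝ, ℝ)) :
    ∫ x, DD (DD (DD (DD f))) x * f x = ∫ x, DD (DD f) x ^ 2 := by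
  rw [ibp_pair (DD (DD (DD f))) f]
  have h2 : ∫ x, DD (DD (DD f)) x * DD f x = - ∫ x, DD (DD f) x * DD (DD f) x :=
    ibp_pair (DD (DD f)) (DD f)
  have hc : ∫ x, DD (DD (DD f)) x * DD f x = ∫ x, (DD (DD (DD f))) x * DD f x := rfl
  rw [h2, sqint]
  ring

lemma e5 (f : 𝓢(ℝ, ℝ)) :
    ∫ x : ℝ, x * DD (DD f) x * DD f x = -(1/2) * ∫ x, DD f x ^ 2 := by
  have h := ibp_x (DD f) (DD f)
  rw [ibp_x_self (DD f), sqint] at h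
  rw [h]; ring

lemma e3 (f : 𝓢(ℝ, ℝ)) :
    ∫ x : ℝ, x * DD (DD (DD (DD f))) x * DD f x = (3/2) * ∫ x, DD (DD f) x ^ 2 := by
  have h := ibp_x (DD (DD (DD f))) (DD f)
  have h1 : ∫ x, DD (DD (DD f)) x * DD f x = - ∫ x, DD (DD f) x * DD (DD f) x :=
    ibp_pair (DD (DD f)) (DD f)
  have h2 := ibp_x (DD (DD f)) (DD (DD f))
  have h3 := ibp_x_self (DD (DD f))
  rw [h3] at h2
  rw [h1, h2, sqint] at h
  rw [h]; ring

lemma DD_add (f g : 𝓢(ℝ, ℝ)) : DD (f + g) = DD f + DD g := by simp [DD]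
lemma DD_smul (r : ℝ) (f : 𝓢(ℝ, ℝ)) : DD (r • f) = r • DD f := by simp [DD]

lemma hasDerivAt_form (a b : 𝓢(ℝ, ℝ)) (x : ℝ) :
    HasDerivAt (fun y : ℝ => a y + 2 * y * b y)
      ((DD a + (2:ℝ) • b) x + 2 * x * DD b x) x := by
  have h1 := sch_hasDerivAt a x
  have h2 := ((hasDerivAt_id x).const_mul 2).mul (sch_hasDerivAt b x)
  simp only [id_eq] at h2
  have h := h1.add h2
  refine h.congr_deriv ?_
  simp [SchwartzMap.add_apply, SchwartzMap.smul_apply, smul_eq_mul]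
  ring

lemma deriv_form (a b : 𝓢(ℝ, ℝ)) :
    deriv (fun y : ℝ => a y + 2 * y * b y)
      = fun y : ℝ => (DD a + (2:ℝ) • b) y + 2 * y * DD b y :=
  funext fun x => (hasDerivAt_form a b x).deriv

lemma iter2_form (a b : 𝓢(ℝ, ℝ)) :
    iteratedDeriv 2 (fun y : ℝ => a y + 2 * y * b y)
      = fun x : ℝ => (DD (DD a) x + 4 * DD b x) + 2 * x * DD (DD b) x := by
  have h2 : iteratedDeriv 2 (fun y : ℝ => a y + 2 * y * b y)
      = deriv (deriv (fun y : ℝ => a y + 2 * y * b y)) := by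
    rw [iteratedDeriv_succ, iteratedDeriv_one]
  rw [h2]
  rw [deriv_form a b, deriv_form (DD a + (2:ℝ) • b) (DD b)]
  funext x
  simp [DD_add, DD_smul, SchwartzMap.add_apply, SchwartzMap.smul_apply, smul_eq_mul]
  ring

lemma iter4_form (a b : 𝓢(ℝ, ℝ)) :
    iteratedDeriv 4 (fun y : ℝ => a y + 2 * y * b y)
      = fun x : ℝ => (DD (DD (DD (DD a))) x + 8 * DD (DD (DD b)) x)
          + 2 * x * DD (DD (DD (DD b))) x := by
  have h4 : iteratedDeriv 4 (fun y : ℝ => a y + 2 * y * b y)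
      = deriv (deriv (deriv (deriv (fun y : ℝ => a y + 2 * y * b y)))) := by
    rw [iteratedDeriv_succ, iteratedDeriv_succ, iteratedDeriv_succ, iteratedDeriv_one]
  rw [h4]
  rw [deriv_form a b, deriv_form (DD a + (2:ℝ) • b) (DD b),
    deriv_form (DD (DD a + (2:ℝ) • b) + (2:ℝ) • DD b) (DD (DD b)),
    deriv_form (DD (DD (DD a + (2:ℝ) • b) + (2:ℝ) • DD b) + (2:ℝ) • DD (DD b)) (DD (DD (DD b)))]
  funext x
  simp [DD_add, DD_smul, SchwartzMap.add_apply, SchwartzMap.smul_apply, smul_eq_mul]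
  ring

/-- Quadratic form of the linearized Hamiltonian at the unstable direction
`w = φ + 2xφ'` for a Schwartz solution `φ` of the solitary-wave equation. -/
theorem quadratic_form_unstable_direction (p β c : ℝ) (hp : 1 < p) (hc : c ^ 2 < 1)
    (hβ : β < 2 * Real.sqrt (1 - c ^ 2)) (φ : SchwartzMap ℝ ℝ)
    (hφ : ∀ x : ℝ, iteratedDeriv 4 (⇑φ) x + β * iteratedDeriv 2 (⇑φ) x
      + (1 - c ^ 2) * φ x = |φ x| ^ (p - 1) * φ x) :
    (∫ x : ℝ,
        ((iteratedDeriv 4 (fun y : ℝ => φ y + 2 * y * deriv (⇑φ) y) x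
          + β * iteratedDeriv 2 (fun y : ℝ => φ y + 2 * y * deriv (⇑φ) y) x
          + (1 - c ^ 2) * (φ x + 2 * x * deriv (⇑φ) x)
          - p * |φ x| ^ (p - 1) * (φ x + 2 * x * deriv (⇑φ) x))
        * (φ x + 2 * x * deriv (⇑φ) x)))
      = ((1 - p) * (p - 3) / (p + 1)) * (∫ x : ℝ, |φ x| ^ (p + 1))
        + ∫ x : ℝ, (24 * (iteratedDeriv 2 (⇑φ) x) ^ 2 - 4 * β * (deriv (⇑φ) x) ^ 2) := by
  have hp1 : p + 1 ≠ 0 := by linarith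
  have hder : deriv (⇑φ) = ⇑(DD φ) := DD_coe φ
  have hi2 : iteratedDeriv 2 (⇑φ) = ⇑(DD (DD φ)) := by
    rw [iteratedDeriv_succ, iteratedDeriv_one, hder, DD_coe]
  have hi4 : iteratedDeriv 4 (⇑φ) = ⇑(DD (DD (DD (DD φ)))) := by
    rw [iteratedDeriv_succ, iteratedDeriv_succ, iteratedDeriv_succ, iteratedDeriv_one,
      hder, DD_coe, DD_coe, DD_coe]
  set G : 𝓢(ℝ, ℝ) := DD (DD (DD (DD φ))) + β • DD (DD φ) + (1 - c^2) • φ with hGdef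
  have hGval : ∀ x, G x = DD (DD (DD (DD φ))) x + β * DD (DD φ) x + (1 - c^2) * φ x := by
    intro x
    simp [hGdef, SchwartzMap.add_apply, SchwartzMap.smul_apply, smul_eq_mul]
  have hG : ∀ x, G x = |φ x| ^ (p - 1) * φ x := by
    intro x
    have h := hφ x
    rw [hi4, hi2] at h
    rw [hGval x, ← h]
  have hDGval : ∀ x, DD G x
      = DD (DD (DD (DD (DD φ)))) x + β * DD (DD (DD φ)) x + (1 - c^2) * DD φ x := by
    intro x
    simp [hGdef, DD_add, DD_smul, SchwartzMap.add_apply, SchwartzMap.smul_apply, smul_eq_mul]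
  have hDG : ∀ x, DD G x = p * |φ x| ^ (p - 1) * DD φ x := by
    intro x
    have hcoe : ⇑G = fun y => |φ y| ^ (p - 1) * φ y := funext hG
    have hd : HasDerivAt (fun y => |φ y| ^ (p - 1) * φ y) (p * |φ x| ^ (p - 1) * DD φ x) x := by
      have h := (hasDerivAt_nl hp (φ x)).comp x (sch_hasDerivAt φ x)
      exact h
    have h0 : DD G x = deriv (⇑G) x := by rw [DD_coe]
    rw [h0, hcoe, hd.deriv]
  have hGd : ∀ x, DD (DD (DD (DD (DD φ)))) x + β * DD (DD (DD φ)) x + (1 - c^2) * DD φ x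
      = p * |φ x| ^ (p - 1) * DD φ x := fun x => by rw [← hDGval x, hDG x]
  -- rewrite the goal
  rw [hder, hi2, iter4_form φ (DD φ), iter2_form φ (DD φ)]
  -- pointwise identity for the big integrand
  have hpt : ∀ x : ℝ,
      ((DD (DD (DD (DD φ))) x + 8 * DD (DD (DD (DD φ))) x + 2 * x * DD (DD (DD (DD (DD φ)))) x)
        + β * ((DD (DD φ) x + 4 * DD (DD φ) x) + 2 * x * DD (DD (DD φ)) x)
        + (1 - c ^ 2) * (φ x + 2 * x * DD φ x)
        - p * |φ x| ^ (p - 1) * (φ x + 2 * x * DD φ x))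
      * (φ x + 2 * x * DD φ x)
      = (1 - p) * (G x * φ x) + ((2 * (1 - p)) * (x * G x * DD φ x)
        + (8 * (DD (DD (DD (DD φ))) x * φ x) + (16 * (x * DD (DD (DD (DD φ))) x * DD φ x)
        + ((4 * β) * (DD (DD φ) x * φ x) + (8 * β) * (x * DD (DD φ) x * DD φ x))))) := by
    intro x
    linear_combination (-(φ x + 2 * x * DD φ x)) * hGval x
      + (p * (φ x + 2 * x * DD φ x)) * hG x
      + (2 * x * (φ x + 2 * x * DD φ x)) * hGd x
  -- use the pointwise identity
  have hL : (∫ x : ℝ,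
      ((DD (DD (DD (DD φ))) x + 8 * DD (DD (DD (DD φ))) x + 2 * x * DD (DD (DD (DD (DD φ)))) x)
        + β * ((DD (DD φ) x + 4 * DD (DD φ) x) + 2 * x * DD (DD (DD φ)) x)
        + (1 - c ^ 2) * (φ x + 2 * x * DD φ x)
        - p * |φ x| ^ (p - 1) * (φ x + 2 * x * DD φ x))
      * (φ x + 2 * x * DD φ x))
      = ∫ x : ℝ, ((1 - p) * (G x * φ x) + ((2 * (1 - p)) * (x * G x * DD φ x)
        + (8 * (DD (DD (DD (DD φ))) x * φ x) + (16 * (x * DD (DD (DD (DD φ))) x * DD φ x)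
        + ((4 * β) * (DD (DD φ) x * φ x) + (8 * β) * (x * DD (DD φ) x * DD φ x)))))) :=
    integral_congr_ae (Filter.Eventually.of_forall hpt)
  rw [hL]
  have i1 : Integrable (fun x : ℝ => (1 - p) * (G x * φ x)) := (int_mul G φ).const_mul _
  have i2 : Integrable (fun x : ℝ => (2 * (1 - p)) * (x * G x * DD φ x)) :=
    (int_xmul G (DD φ)).const_mul _
  have i3 : Integrable (fun x : ℝ => 8 * (DD (DD (DD (DD φ))) x * φ x)) :=
    (int_mul (DD (DD (DD (DD φ)))) φ).const_mul _
  have i4 : Integrable (fun x : ℝ => 16 * (x * DD (DD (DD (DD φ))) x * DD φ x)) :=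
    (int_xmul (DD (DD (DD (DD φ)))) (DD φ)).const_mul _
  have i5 : Integrable (fun x : ℝ => (4 * β) * (DD (DD φ) x * φ x)) :=
    (int_mul (DD (DD φ)) φ).const_mul _
  have i6 : Integrable (fun x : ℝ => (8 * β) * (x * DD (DD φ) x * DD φ x)) :=
    (int_xmul (DD (DD φ)) (DD φ)).const_mul _
  have s5 : Integrable (fun x : ℝ => (4 * β) * (DD (DD φ) x * φ x)
      + (8 * β) * (x * DD (DD φ) x * DD φ x)) := i5.add i6
  have s4 : Integrable (fun x : ℝ => 16 * (x * DD (DD (DD (DD φ))) x * DD φ x)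
      + ((4 * β) * (DD (DD φ) x * φ x) + (8 * β) * (x * DD (DD φ) x * DD φ x))) := i4.add s5
  have s3 : Integrable (fun x : ℝ => 8 * (DD (DD (DD (DD φ))) x * φ x)
      + (16 * (x * DD (DD (DD (DD φ))) x * DD φ x)
      + ((4 * β) * (DD (DD φ) x * φ x) + (8 * β) * (x * DD (DD φ) x * DD φ x)))) := i3.add s4
  have s2 : Integrable (fun x : ℝ => (2 * (1 - p)) * (x * G x * DD φ x)
      + (8 * (DD (DD (DD (DD φ))) x * φ x) + (16 * (x * DD (DD (DD (DD φ))) x * DD φ x)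
      + ((4 * β) * (DD (DD φ) x * φ x) + (8 * β) * (x * DD (DD φ) x * DD φ x))))) := i2.add s3
  rw [my_integral_add i1 s2, my_integral_add i2 s3, my_integral_add i3 s4,
    my_integral_add i4 s5, my_integral_add i5 i6,
    integral_const_mul, integral_const_mul, integral_const_mul, integral_const_mul,
    integral_const_mul, integral_const_mul]
  -- right-hand side conversions
  have hR1 : (∫ x : ℝ, |φ x| ^ (p + 1)) = ∫ x : ℝ, G x * φ x := by
    refine integral_congr_ae (Filter.Eventually.of_forall fun x => ?_)
    show |φ x| ^ (p + 1) = G x * φ x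
    rw [hG x]
    exact (nl_sq hp (φ x)).symm
  have hR2 : (∫ x : ℝ, (24 * (DD (DD φ) x) ^ 2 - 4 * β * (DD φ x) ^ 2))
      = 24 * (∫ x : ℝ, DD (DD φ) x ^ 2) - 4 * β * (∫ x : ℝ, DD φ x ^ 2) := by
    rw [my_integral_sub ((int_sq (DD (DD φ))).const_mul 24) ((int_sq (DD φ)).const_mul (4 * β)),
      integral_const_mul, integral_const_mul]
  rw [hR1, hR2]
  -- nonlinear integration by parts
  have hnl : (∫ x : ℝ, (G x * φ x + (p + 1) * (x * G x * DD φ x))) = 0 := by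
    refine integral_deriv_zero (fun x : ℝ => x * (G x * φ x)) _ (fun x => ?_)
      ((int_mul G φ).add ((int_xmul G (DD φ)).const_mul (p + 1))) ?_ ?_
    · have hfun : (fun y : ℝ => y * (G y * φ y)) = fun y : ℝ => y * |φ y| ^ (p + 1) := by
        funext y
        rw [hG y, nl_sq hp (φ y)]
      rw [hfun]
      have hd := (hasDerivAt_id x).mul ((hasDerivAt_nl' hp (φ x)).comp x (sch_hasDerivAt φ x))
      simp only [id_eq, Function.comp] at hd
      refine hd.congr_deriv ?_
      linear_combination (-(φ x + (p + 1) * x * DD φ x)) * hG x - nl_sq hp (φ x)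
    · have h := tend_xmul G φ atTop_le_cocompact'
      simpa [mul_assoc] using h
    · have h := tend_xmul G φ atBot_le_cocompact'
      simpa [mul_assoc] using h
  rw [my_integral_add (int_mul G φ) ((int_xmul G (DD φ)).const_mul (p + 1)),
    integral_const_mul] at hnl
  -- Pohozaev identities
  have hP1 : (∫ x : ℝ, G x * φ x)
      = (∫ x : ℝ, DD (DD φ) x ^ 2) - β * (∫ x : ℝ, DD φ x ^ 2)
        + (1 - c ^ 2) * (∫ x : ℝ, φ x ^ 2) := by
    have h0 : (∫ x : ℝ, G x * φ x)
        = ∫ x : ℝ, (DD (DD (DD (DD φ))) x * φ x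
          + (β * (DD (DD φ) x * φ x) + (1 - c ^ 2) * (φ x * φ x))) := by
      refine integral_congr_ae (Filter.Eventually.of_forall fun x => ?_)
      show G x * φ x = _
      rw [hGval x]; ring
    have j1 : Integrable (fun x : ℝ => β * (DD (DD φ) x * φ x)
        + (1 - c ^ 2) * (φ x * φ x)) :=
      ((int_mul (DD (DD φ)) φ).const_mul β).add ((int_mul φ φ).const_mul (1 - c ^ 2))
    rw [h0, my_integral_add (int_mul (DD (DD (DD (DD φ)))) φ) j1,
      my_integral_add ((int_mul (DD (DD φ)) φ).const_mul β) ((int_mul φ φ).const_mul (1 - c ^ 2)),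
      integral_const_mul, integral_const_mul, e2 φ, e4 φ, sqint φ]
    ring
  have hP2 : (∫ x : ℝ, x * G x * DD φ x)
      = (3/2) * (∫ x : ℝ, DD (DD φ) x ^ 2) - (β / 2) * (∫ x : ℝ, DD φ x ^ 2)
        - ((1 - c ^ 2) / 2) * (∫ x : ℝ, φ x ^ 2) := by
    have h0 : (∫ x : ℝ, x * G x * DD φ x)
        = ∫ x : ℝ, (x * DD (DD (DD (DD φ))) x * DD φ x
          + (β * (x * DD (DD φ) x * DD φ x) + (1 - c ^ 2) * (x * φ x * DD φ x))) := by
      refine integral_congr_ae (Filter.Eventually.of_forall fun x => ?_)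
      show x * G x * DD φ x = _
      rw [hGval x]; ring
    have j2 : Integrable (fun x : ℝ => β * (x * DD (DD φ) x * DD φ x)
        + (1 - c ^ 2) * (x * φ x * DD φ x)) :=
      ((int_xmul (DD (DD φ)) (DD φ)).const_mul β).add
        ((int_xmul φ (DD φ)).const_mul (1 - c ^ 2))
    rw [h0, my_integral_add (int_xmul (DD (DD (DD (DD φ)))) (DD φ)) j2,
      my_integral_add ((int_xmul (DD (DD φ)) (DD φ)).const_mul β)
        ((int_xmul φ (DD φ)).const_mul (1 - c ^ 2)),
      integral_const_mul, integral_const_mul, e3 φ, e5 φ, ibp_x_self φ]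
    ring
  rw [e2 φ, e3 φ, e4 φ, e5 φ]
  set A := ∫ x : ℝ, DD (DD φ) x ^ 2 with hA
  set B := ∫ x : ℝ, DD φ x ^ 2 with hB
  set C := ∫ x : ℝ, φ x ^ 2 with hC
  set X := ∫ x : ℝ, G x * φ x with hX
  set E := ∫ x : ℝ, x * G x * DD φ x with hE
  have hXE : X = -(p + 1) * E := by linarith
  rw [hXE] at hP1 ⊢
  have hdiv : (1 - p) * (p - 3) / (p + 1) * (-(p + 1) * E) = -((1 - p) * (p - 3) * E) := by
    field_simp
  rw [hdiv]
  linear_combination (-2) * hP1 + (-4) * hP2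
end
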